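/- Let λ > 0, let b be a bump function as in the context, and let v ∈ L¹(ℝ). Then for every f ∈ L¹(ℝ), ‖R[f]‖₁ ≤ ‖f‖₁²/(8λ²) + (‖f‖₁²/λ²)·exp(‖f‖₁/(2λ²)) + ‖v‖₁. -/

import Mathlib

open MeasureTheory Real

/-- Convolution of complex-valued functions on `ℝ`:
`(f ∗ g)(ξ) = ∫_ℝ f(ξ − η)·g(η) dη`. -/
noncomputable def convol (f g : ℝ → ℂ) (ξ : ℝ) : ℂ :=
  ∫ η : ℝ, f (ξ - η) * g η

/-- The `m`-fold convolution power `f^{∗m}` (`f^{∗1} = f`, `f^{∗(m+1)} = f^{∗m} ∗ f`);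
the value at `m = 0` is junk and unused. -/
noncomputable def convPow (f : ℝ → ℂ) : ℕ → ℝ → ℂ
  | 0 => fun _ => 0
  | 1 => f
  | (m + 2) => convol (convPow f (m + 1)) f

/-- `exp₂∗[f] = Σ_{m=2}^∞ f^{∗m}/m!`. -/
noncomputable def exp2Star (f : ℝ → ℂ) (ξ : ℝ) : ℂ :=
  ∑' m : ℕ, convPow f (m + 2) ξ / ((m + 2).factorial : ℂ)

/-- `W_b[f](ξ) = f(ξ)·b(ξ)/(4λ² − ξ²)`. -/
noncomputable def opWb (lam : ℝ) (b : ℝ → ℝ) (f : ℝ → ℂ) (ξ : ℝ) : ℂ :=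
  f ξ * ((b ξ / (4 * lam ^ 2 - ξ ^ 2) : ℝ) : ℂ)

/-- `W̃_b[f](ξ) = f(ξ)·iξ·b(ξ)/(4λ² − ξ²)`. -/
noncomputable def opWtb (lam : ℝ) (b : ℝ → ℝ) (f : ℝ → ℂ) (ξ : ℝ) : ℂ :=
  f ξ * Complex.I * (ξ : ℂ) * ((b ξ / (4 * lam ^ 2 - ξ ^ 2) : ℝ) : ℂ)

/-- `R[f](ξ) = (1/4)(W̃_b[f] ∗ W̃_b[f])(ξ) − 4λ²·exp₂∗[W_b[f]](ξ) + v(ξ)`. -/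
noncomputable def opR (lam : ℝ) (b : ℝ → ℝ) (v : ℝ → ℂ) (f : ℝ → ℂ) (ξ : ℝ) : ℂ :=
  (1 / 4) * convol (opWtb lam b f) (opWtb lam b f) ξ
    - 4 * lam ^ 2 * exp2Star (opWb lam b f) ξ + v ξ

open scoped ENNReal Convolution

set_option maxHeartbeats 1000000

/-- The `L¹`-type quantity `∫⁻ ‖g‖`. -/
noncomputable def I1 (g : ℝ → ℂ) : ℝ≥0∞ := ∫⁻ x, (‖g x‖₊ : ℝ≥0∞)

lemma I1_eq {g : ℝ → ℂ} (hg : Integrable g) : I1 g = ENNReal.ofReal (∫ x, ‖g x‖) :=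
  (ofReal_integral_norm_eq_lintegral_enorm hg).symm

lemma convol_eq (f g : ℝ → ℂ) :
    convol f g = (g ⋆[ContinuousLinearMap.mul ℂ ℂ, volume] f) := by
  funext x
  rw [convolution_mul]
  simp only [convol]
  exact integral_congr_ae (Filter.Eventually.of_forall fun η => mul_comm _ _)

lemma convol_integrable {f g : ℝ → ℂ} (hf : Integrable f) (hg : Integrable g) :
    Integrable (convol f g) := by
  rw [convol_eq]
  exact hg.integrable_convolution _ hf

lemma I1_convol_le {f g : ℝ → ℂ} (hf : AEStronglyMeasurable f volume)
    (hg : AEStronglyMeasurable g volume) : I1 (convol f g) ≤ I1 f * I1 g := by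
  have h2 : AEMeasurable (fun p : ℝ × ℝ => (‖f (p.1 - p.2)‖₊ : ℝ≥0∞)) (volume.prod volume) :=
    hf.enorm.comp_quasiMeasurePreserving (quasiMeasurePreserving_sub volume volume)
  have h3 : AEMeasurable (fun p : ℝ × ℝ => (‖g p.2‖₊ : ℝ≥0∞)) (volume.prod volume) :=
    hg.enorm.comp_quasiMeasurePreserving Measure.quasiMeasurePreserving_snd
  have hprod : AEMeasurable
      (Function.uncurry fun x η => (‖f (x - η)‖₊ : ℝ≥0∞) * (‖g η‖₊ : ℝ≥0∞))
      (volume.prod volume) := h2.mul h3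
  calc I1 (convol f g)
      ≤ ∫⁻ x, ∫⁻ η, (‖f (x - η)‖₊ : ℝ≥0∞) * (‖g η‖₊ : ℝ≥0∞) := by
        refine lintegral_mono fun x => ?_
        calc (‖convol f g x‖₊ : ℝ≥0∞)
            ≤ ∫⁻ η, (‖f (x - η) * g η‖₊ : ℝ≥0∞) := enorm_integral_le_lintegral_enorm _
          _ = _ := by simp_rw [nnnorm_mul, ENNReal.coe_mul]
    _ = ∫⁻ η, ∫⁻ x, (‖f (x - η)‖₊ : ℝ≥0∞) * (‖g η‖₊ : ℝ≥0∞) := lintegral_lintegral_swap hprod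
    _ = ∫⁻ η, (∫⁻ x, (‖f (x - η)‖₊ : ℝ≥0∞)) * (‖g η‖₊ : ℝ≥0∞) := by
        refine lintegral_congr fun η => ?_
        rw [← lintegral_mul_const' _ _ ENNReal.coe_ne_top]
    _ = ∫⁻ η, (‖g η‖₊ : ℝ≥0∞) * I1 f := by
        refine lintegral_congr fun η => ?_
        rw [lintegral_sub_right_eq_self (fun x => (‖f x‖₊ : ℝ≥0∞)) η, mul_comm]
        rfl
    _ = I1 g * I1 f := lintegral_mul_const'' _ hg.enorm
    _ = I1 f * I1 g := mul_comm _ _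

lemma convPow_prop {g : ℝ → ℂ} (hg : Integrable g) :
    ∀ m : ℕ, Integrable (convPow g (m + 1)) ∧ I1 (convPow g (m + 1)) ≤ (I1 g) ^ (m + 1)
  | 0 => ⟨hg, by simp [convPow]⟩
  | (m + 1) => by
    obtain ⟨ih1, ih2⟩ := convPow_prop hg m
    have heq : convPow g (m + 1 + 1) = convol (convPow g (m + 1)) g := rfl
    refine ⟨heq ▸ convol_integrable ih1 hg, ?_⟩
    calc I1 (convPow g (m + 1 + 1)) = I1 (convol (convPow g (m + 1)) g) := by rw [heq]
      _ ≤ I1 (convPow g (m + 1)) * I1 g := I1_convol_le ih1.1 hg.1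
      _ ≤ (I1 g) ^ (m + 1) * I1 g := mul_le_mul_left ih2 _
      _ = (I1 g) ^ (m + 1 + 1) := (pow_succ _ _).symm

lemma enorm_tsum_le (F : ℕ → ℂ) : (‖∑' i, F i‖₊ : ℝ≥0∞) ≤ ∑' i, (‖F i‖₊ : ℝ≥0∞) := by
  by_cases h : ∑' i, (‖F i‖₊ : ℝ≥0∞) = ⊤
  · simp [h]
  · have hs : Summable (fun i => ‖F i‖₊) := ENNReal.tsum_coe_ne_top_iff_summable.mp h
    rw [← ENNReal.coe_tsum hs]
    exact_mod_cast nnnorm_tsum_le hs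


lemma I1_exp2Star_le {g : ℝ → ℂ} (hg : Integrable g) {Mr : ℝ} (hMr : 0 ≤ Mr)
    (hM : ∫ x, ‖g x‖ ≤ Mr) :
    I1 (exp2Star g) ≤ ENNReal.ofReal (Mr ^ 2 * Real.exp Mr) := by
  have hI1g : I1 g ≤ ENNReal.ofReal Mr := by
    rw [I1_eq hg]; exact ENNReal.ofReal_le_ofReal hM
  have hint : ∀ m : ℕ, Integrable (convPow g (m + 2)) := fun m => (convPow_prop hg (m + 1)).1
  have hIconv : ∀ m : ℕ, ∫ x, ‖convPow g (m + 2) x‖ ≤ Mr ^ (m + 2) := by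
    intro m
    have h : I1 (convPow g (m + 2)) ≤ (I1 g) ^ (m + 2) := (convPow_prop hg (m + 1)).2
    rw [I1_eq (hint m)] at h
    have h2 : (I1 g) ^ (m + 2) ≤ ENNReal.ofReal (Mr ^ (m + 2)) := by
      rw [ENNReal.ofReal_pow hMr]
      exact pow_le_pow_left' hI1g _
    exact (ENNReal.ofReal_le_ofReal_iff (by positivity)).mp (le_trans h h2)
  have hterm : ∀ m : ℕ,
      (∫⁻ x, (‖convPow g (m + 2) x / ((m + 2).factorial : ℂ)‖₊ : ℝ≥0∞)) ≤
        ENNReal.ofReal (Mr ^ (m + 2) / ((m + 2).factorial : ℝ)) := by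
    intro m
    have hint2 : Integrable (fun x => convPow g (m + 2) x / ((m + 2).factorial : ℂ)) :=
      (hint m).div_const _
    erw [← ofReal_integral_norm_eq_lintegral_enorm hint2]
    apply ENNReal.ofReal_le_ofReal
    have hnorm : ∀ x : ℝ, ‖convPow g (m + 2) x / ((m + 2).factorial : ℂ)‖
        = ‖convPow g (m + 2) x‖ / (((m + 2).factorial : ℝ)) := by
      intro x
      rw [norm_div]
      norm_num
    calc ∫ x, ‖convPow g (m + 2) x / ((m + 2).factorial : ℂ)‖
        = (∫ x, ‖convPow g (m + 2) x‖) / (((m + 2).factorial : ℝ)) := by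
          simp_rw [hnorm]
          exact integral_div _ _
      _ ≤ Mr ^ (m + 2) / (((m + 2).factorial : ℝ)) := by
          gcongr
          exact hIconv m
  have hsum0 : Summable (fun n : ℕ => Mr ^ n / (n.factorial : ℝ)) :=
    Real.summable_pow_div_factorial Mr
  have hsum1 : Summable (fun m : ℕ => Mr ^ (m + 2) / (((m + 2).factorial : ℝ))) :=
    hsum0.comp_injective (add_left_injective 2)
  have hsum2 : Summable (fun m : ℕ => Mr ^ 2 * (Mr ^ m / (m.factorial : ℝ))) :=
    hsum0.mul_left _
  have hexp : Real.exp Mr = ∑' n : ℕ, Mr ^ n / (n.factorial : ℝ) := by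
    rw [Real.exp_eq_exp_ℝ, NormedSpace.exp_eq_tsum_div]
  have htsum : (∑' m : ℕ, Mr ^ (m + 2) / (((m + 2).factorial : ℝ)))
      ≤ Mr ^ 2 * Real.exp Mr := by
    calc (∑' m : ℕ, Mr ^ (m + 2) / (((m + 2).factorial : ℝ)))
        ≤ ∑' m : ℕ, Mr ^ 2 * (Mr ^ m / (m.factorial : ℝ)) := by
          refine Summable.tsum_le_tsum (fun m => ?_) hsum1 hsum2
          calc Mr ^ (m + 2) / (((m + 2).factorial : ℝ))
              ≤ Mr ^ (m + 2) / ((m.factorial : ℝ)) := by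
                apply div_le_div_of_nonneg_left (pow_nonneg hMr _)
                · exact_mod_cast m.factorial_pos
                · exact_mod_cast Nat.factorial_le (by omega)
            _ = Mr ^ 2 * (Mr ^ m / (m.factorial : ℝ)) := by
                rw [pow_add]; ring
      _ = Mr ^ 2 * ∑' m : ℕ, Mr ^ m / (m.factorial : ℝ) := tsum_mul_left
      _ = Mr ^ 2 * Real.exp Mr := by rw [hexp]
  calc I1 (exp2Star g)
      ≤ ∫⁻ x, ∑' m : ℕ, (‖convPow g (m + 2) x / ((m + 2).factorial : ℂ)‖₊ : ℝ≥0∞) :=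
        lintegral_mono fun x => enorm_tsum_le _
    _ = ∑' m : ℕ, ∫⁻ x, (‖convPow g (m + 2) x / ((m + 2).factorial : ℂ)‖₊ : ℝ≥0∞) :=
        lintegral_tsum (fun m => ((hint m).div_const _).aestronglyMeasurable.enorm)
    _ ≤ ∑' m : ℕ, ENNReal.ofReal (Mr ^ (m + 2) / (((m + 2).factorial : ℝ))) :=
        ENNReal.tsum_le_tsum hterm
    _ = ENNReal.ofReal (∑' m : ℕ, Mr ^ (m + 2) / (((m + 2).factorial : ℝ))) :=
        (ENNReal.ofReal_tsum_of_nonneg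
          (fun m => div_nonneg (pow_nonneg hMr _) (by positivity)) hsum1).symm
    _ ≤ ENNReal.ofReal (Mr ^ 2 * Real.exp Mr) := ENNReal.ofReal_le_ofReal htsum

lemma I1_const_mul (c : ℂ) (z : ℝ → ℂ) :
    I1 (fun x => c * z x) = ENNReal.ofReal ‖c‖ * I1 z := by
  unfold I1
  simp_rw [nnnorm_mul, ENNReal.coe_mul]
  rw [lintegral_const_mul' _ _ ENNReal.coe_ne_top, ofReal_norm_eq_enorm, enorm_eq_nnnorm]

/-- for every `f ∈ L¹(ℝ)`,
`‖R[f]‖₁ ≤ ‖f‖₁²/(8λ²) + (‖f‖₁²/λ²)·exp(‖f‖₁/(2λ²)) + ‖v‖₁`. -/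
theorem stmt_4 (lam : ℝ) (hlam : 0 < lam)
    (b : ℝ → ℝ) (hb : ContDiff ℝ (⊤ : ℕ∞) b)
    (hb1 : ∀ ξ : ℝ, |ξ| ≤ lam → b ξ = 1)
    (hb2 : ∀ ξ : ℝ, 0 ≤ b ξ ∧ b ξ ≤ 1)
    (hb3 : ∀ ξ : ℝ, Real.sqrt 2 * lam ≤ |ξ| → b ξ = 0)
    (v : ℝ → ℂ) (hv : Integrable v)
    (f : ℝ → ℂ) (hf : Integrable f) :
    eLpNorm (opR lam b v f) 1 volume ≤
      ENNReal.ofReal ((∫ x : ℝ, ‖f x‖) ^ 2 / (8 * lam ^ 2)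
        + ((∫ x : ℝ, ‖f x‖) ^ 2 / lam ^ 2) * Real.exp ((∫ x : ℝ, ‖f x‖) / (2 * lam ^ 2))
        + ∫ x : ℝ, ‖v x‖) := by
  set Nf := ∫ x : ℝ, ‖f x‖ with hNfdef
  have hNf : 0 ≤ Nf := integral_nonneg fun x => norm_nonneg _
  have hs2 : (0:ℝ) < Real.sqrt 2 := Real.sqrt_pos.mpr (by norm_num)
  have h22 : Real.sqrt 2 * Real.sqrt 2 = 2 := Real.mul_self_sqrt (by norm_num)
  have hcmeas : Measurable fun ξ : ℝ => ((b ξ / (4 * lam ^ 2 - ξ ^ 2) : ℝ) : ℂ) := by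
    apply Complex.measurable_ofReal.comp
    exact (hb.continuous.measurable).div (measurable_const.sub (measurable_id.pow_const 2))
  have hden : ∀ ξ : ℝ, |ξ| < Real.sqrt 2 * lam → 2 * lam ^ 2 ≤ 4 * lam ^ 2 - ξ ^ 2 := by
    intro ξ h
    nlinarith [sq_abs ξ, abs_nonneg ξ]
  have hfrac : ∀ ξ : ℝ, |ξ| < Real.sqrt 2 * lam →
      b ξ / (4 * lam ^ 2 - ξ ^ 2) ≤ 1 / (2 * lam ^ 2) ∧
        0 ≤ b ξ / (4 * lam ^ 2 - ξ ^ 2) := by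
    intro ξ h
    have hd := hden ξ h
    have hdpos : (0:ℝ) < 4 * lam ^ 2 - ξ ^ 2 := lt_of_lt_of_le (by positivity) hd
    refine ⟨div_le_div₀ zero_le_one (hb2 ξ).2 (by positivity) hd,
      div_nonneg (hb2 ξ).1 hdpos.le⟩
  have hbW : ∀ ξ : ℝ, ‖opWb lam b f ξ‖ ≤ 1 / (2 * lam ^ 2) * ‖f ξ‖ := by
    intro ξ
    rw [opWb, norm_mul, Complex.norm_real, Real.norm_eq_abs]
    rcases le_or_gt (Real.sqrt 2 * lam) |ξ| with h | h
    · rw [hb3 ξ h]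
      simp only [zero_div, abs_zero, mul_zero]
      positivity
    · obtain ⟨h1, h0⟩ := hfrac ξ h
      rw [abs_of_nonneg h0, mul_comm]
      exact mul_le_mul_of_nonneg_right h1 (norm_nonneg _)
  have hbWt : ∀ ξ : ℝ, ‖opWtb lam b f ξ‖ ≤ 1 / (Real.sqrt 2 * lam) * ‖f ξ‖ := by
    intro ξ
    have hnorm : ‖opWtb lam b f ξ‖
        = ‖f ξ‖ * (|ξ| * |b ξ / (4 * lam ^ 2 - ξ ^ 2)|) := by
      rw [opWtb, norm_mul, norm_mul, norm_mul, Complex.norm_I, Complex.norm_real,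
        Complex.norm_real, Real.norm_eq_abs, Real.norm_eq_abs]
      ring
    rw [hnorm]
    rcases le_or_gt (Real.sqrt 2 * lam) |ξ| with h | h
    · rw [hb3 ξ h]
      simp only [zero_div, abs_zero, mul_zero]
      positivity
    · obtain ⟨h1, h0⟩ := hfrac ξ h
      have hx : |ξ| * |b ξ / (4 * lam ^ 2 - ξ ^ 2)| ≤ 1 / (Real.sqrt 2 * lam) := by
        rw [abs_of_nonneg h0]
        calc |ξ| * (b ξ / (4 * lam ^ 2 - ξ ^ 2))
            ≤ (Real.sqrt 2 * lam) * (1 / (2 * lam ^ 2)) :=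
              mul_le_mul h.le h1 h0 (by positivity)
          _ = 1 / (Real.sqrt 2 * lam) := by
              field_simp
              nlinarith [h22]
      calc ‖f ξ‖ * (|ξ| * |b ξ / (4 * lam ^ 2 - ξ ^ 2)|)
          ≤ ‖f ξ‖ * (1 / (Real.sqrt 2 * lam)) :=
            mul_le_mul_of_nonneg_left hx (norm_nonneg _)
        _ = 1 / (Real.sqrt 2 * lam) * ‖f ξ‖ := mul_comm _ _
  have haesW : AEStronglyMeasurable (opWb lam b f) volume :=
    hf.aestronglyMeasurable.mul hcmeas.aestronglyMeasurable
  have haesWt : AEStronglyMeasurable (opWtb lam b f) volume := by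
    apply AEStronglyMeasurable.mul ?_ hcmeas.aestronglyMeasurable
    apply AEStronglyMeasurable.mul ?_
      Complex.continuous_ofReal.measurable.aestronglyMeasurable
    exact hf.aestronglyMeasurable.mul_const _
  have hW_int : Integrable (opWb lam b f) :=
    Integrable.mono' (hf.norm.const_mul _) haesW (Filter.Eventually.of_forall hbW)
  have hWt_int : Integrable (opWtb lam b f) :=
    Integrable.mono' (hf.norm.const_mul _) haesWt (Filter.Eventually.of_forall hbWt)
  have hWtN : ∫ x, ‖opWtb lam b f x‖ ≤ 1 / (Real.sqrt 2 * lam) * Nf := by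
    calc ∫ x, ‖opWtb lam b f x‖ ≤ ∫ x, 1 / (Real.sqrt 2 * lam) * ‖f x‖ :=
          integral_mono hWt_int.norm (hf.norm.const_mul _) hbWt
      _ = 1 / (Real.sqrt 2 * lam) * Nf := by rw [integral_const_mul]
  set MWb := Nf / (2 * lam ^ 2) with hMWbdef
  have hMWb0 : 0 ≤ MWb := by positivity
  have hWN : ∫ x, ‖opWb lam b f x‖ ≤ MWb := by
    calc ∫ x, ‖opWb lam b f x‖ ≤ ∫ x, 1 / (2 * lam ^ 2) * ‖f x‖ :=
          integral_mono hW_int.norm (hf.norm.const_mul _) hbW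
      _ = MWb := by rw [integral_const_mul, hMWbdef]; ring
  set A : ℝ → ℂ := fun ξ => (1 / 4) * convol (opWtb lam b f) (opWtb lam b f) ξ with hAdef
  set B : ℝ → ℂ := fun ξ => 4 * lam ^ 2 * exp2Star (opWb lam b f) ξ with hBdef
  have hconv_int : Integrable (convol (opWtb lam b f) (opWtb lam b f)) :=
    convol_integrable hWt_int hWt_int
  have hA_int : Integrable A := by rw [hAdef]; exact hconv_int.const_mul _
  have hI1Wt : I1 (opWtb lam b f) ≤ ENNReal.ofReal (1 / (Real.sqrt 2 * lam) * Nf) := by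
    rw [I1_eq hWt_int]; exact ENNReal.ofReal_le_ofReal hWtN
  have hIA : I1 A ≤ ENNReal.ofReal (Nf ^ 2 / (8 * lam ^ 2)) := by
    have hc2 : (1 / (Real.sqrt 2 * lam) * Nf) * (1 / (Real.sqrt 2 * lam) * Nf)
        = Nf ^ 2 / (2 * lam ^ 2) := by
      field_simp
      linear_combination (-(Nf ^ 2)) * h22
    calc I1 A = ENNReal.ofReal ‖(1 / 4 : ℂ)‖ * I1 (convol (opWtb lam b f) (opWtb lam b f)) := by
          rw [hAdef]; exact I1_const_mul _ _
      _ ≤ ENNReal.ofReal ‖(1 / 4 : ℂ)‖ *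
            (I1 (opWtb lam b f) * I1 (opWtb lam b f)) :=
          mul_le_mul_right (I1_convol_le haesWt haesWt) _
      _ ≤ ENNReal.ofReal ‖(1 / 4 : ℂ)‖ *
            (ENNReal.ofReal (1 / (Real.sqrt 2 * lam) * Nf) *
              ENNReal.ofReal (1 / (Real.sqrt 2 * lam) * Nf)) :=
          mul_le_mul_right (mul_le_mul' hI1Wt hI1Wt) _
      _ = ENNReal.ofReal (‖(1 / 4 : ℂ)‖ *
            ((1 / (Real.sqrt 2 * lam) * Nf) * (1 / (Real.sqrt 2 * lam) * Nf))) := by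
          rw [← ENNReal.ofReal_mul (by positivity), ← ENNReal.ofReal_mul (norm_nonneg _)]
      _ = ENNReal.ofReal (Nf ^ 2 / (8 * lam ^ 2)) := by
          rw [hc2]
          norm_num
          ring_nf
          rw [← ENNReal.ofReal_mul (by norm_num)]
          ring_nf
  have hexpB : I1 (exp2Star (opWb lam b f)) ≤ ENNReal.ofReal (MWb ^ 2 * Real.exp MWb) :=
    I1_exp2Star_le hW_int hMWb0 hWN
  have hcB : ‖(4 * (lam : ℂ) ^ 2 : ℂ)‖ = 4 * lam ^ 2 := by
    rw [norm_mul, norm_pow, Complex.norm_real, Real.norm_eq_abs, sq_abs]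
    norm_num
  have hIB : I1 B ≤ ENNReal.ofReal (Nf ^ 2 / lam ^ 2 * Real.exp (Nf / (2 * lam ^ 2))) := by
    have hreal : 4 * lam ^ 2 * (MWb ^ 2 * Real.exp MWb)
        = Nf ^ 2 / lam ^ 2 * Real.exp (Nf / (2 * lam ^ 2)) := by
      rw [hMWbdef]
      field_simp
      ring
    calc I1 B = ENNReal.ofReal ‖(4 * (lam : ℂ) ^ 2 : ℂ)‖ * I1 (exp2Star (opWb lam b f)) := by
          rw [hBdef]; exact I1_const_mul _ _
      _ ≤ ENNReal.ofReal ‖(4 * (lam : ℂ) ^ 2 : ℂ)‖ *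
            ENNReal.ofReal (MWb ^ 2 * Real.exp MWb) := mul_le_mul_right hexpB _
      _ = ENNReal.ofReal (‖(4 * (lam : ℂ) ^ 2 : ℂ)‖ * (MWb ^ 2 * Real.exp MWb)) :=
          (ENNReal.ofReal_mul (norm_nonneg _)).symm
      _ = ENNReal.ofReal (Nf ^ 2 / lam ^ 2 * Real.exp (Nf / (2 * lam ^ 2))) := by
          rw [hcB, hreal]
  have hopR : ∀ x, opR lam b v f x = A x - B x + v x := by
    intro x
    simp only [hAdef, hBdef, opR]
  have hABv : ∀ x, (‖opR lam b v f x‖₊ : ℝ≥0∞)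
      ≤ ((‖A x‖₊ : ℝ≥0∞) + (‖B x‖₊ : ℝ≥0∞)) + (‖v x‖₊ : ℝ≥0∞) := by
    intro x
    have h : ‖opR lam b v f x‖₊ ≤ (‖A x‖₊ + ‖B x‖₊) + ‖v x‖₊ := by
      rw [hopR x]
      exact le_trans (nnnorm_add_le _ _) (add_le_add_left (nnnorm_sub_le _ _) _)
    exact_mod_cast h
  calc eLpNorm (opR lam b v f) 1 volume
      = ∫⁻ x, (‖opR lam b v f x‖₊ : ℝ≥0∞) := eLpNorm_one_eq_lintegral_enorm
    _ ≤ ∫⁻ x, (((‖A x‖₊ : ℝ≥0∞) + (‖B x‖₊ : ℝ≥0∞)) + (‖v x‖₊ : ℝ≥0∞)) :=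
        lintegral_mono hABv
    _ = (∫⁻ x, ((‖A x‖₊ : ℝ≥0∞) + (‖B x‖₊ : ℝ≥0∞))) + ∫⁻ x, (‖v x‖₊ : ℝ≥0∞) :=
        lintegral_add_right' _ hv.aestronglyMeasurable.enorm
    _ = (I1 A + I1 B) + I1 v := by
        erw [lintegral_add_left' hA_int.aestronglyMeasurable.enorm]
        rfl
    _ ≤ (ENNReal.ofReal (Nf ^ 2 / (8 * lam ^ 2))
          + ENNReal.ofReal (Nf ^ 2 / lam ^ 2 * Real.exp (Nf / (2 * lam ^ 2))))
          + ENNReal.ofReal (∫ x : ℝ, ‖v x‖) := by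
        refine add_le_add (add_le_add hIA hIB) ?_
        rw [I1_eq hv]
    _ = ENNReal.ofReal (Nf ^ 2 / (8 * lam ^ 2)
          + Nf ^ 2 / lam ^ 2 * Real.exp (Nf / (2 * lam ^ 2))
          + ∫ x : ℝ, ‖v x‖) := by
        have e1 : (0:ℝ) ≤ Nf ^ 2 / (8 * lam ^ 2) := by positivity
        have e2 : (0:ℝ) ≤ Nf ^ 2 / lam ^ 2 * Real.exp (Nf / (2 * lam ^ 2)) :=
          mul_nonneg (by positivity) (Real.exp_nonneg _)
        have e3 : (0:ℝ) ≤ ∫ x : ℝ, ‖v x‖ := integral_nonneg fun x => norm_nonneg _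
        rw [← ENNReal.ofReal_add e1 e2, ← ENNReal.ofReal_add (add_nonneg e1 e2) e3]
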